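/- Let n ≥ 1, m ≥ 0, and let φ ⊆ Bool^n × Bool^n × Bool^m be a predicate. Then the workflow authorization policy W_φ is one-shot resilient for budget n if and only if there exists x ∈ Bool^n such that for all y ∈ Bool^n there exists z ∈ Bool^m with φ(x, y, z). -/

import Mathlib

/-- A workflow authorization policy `W = (S, ≼, U, A, C)`:
steps `S`, an ordering relation `ord` (the partial order `≼`), users `U`,
a step authorization relation `A ⊆ S × U`, and a set `C` of constraints.
A constraint is a pair `(T, Θ)` where `T ⊆ S` and `Θ` is a set of functions
from `T` to `U` (represented as `σ → Option υ` with domain exactly `T`). -/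
structure WAP (σ υ : Type) where
  S : Finset σ
  ord : σ → σ → Prop
  U : Finset υ
  A : Set (σ × υ)
  C : Set (Finset σ × Set (σ → Option υ))

namespace WAP

variable {σ υ : Type} [DecidableEq σ] [DecidableEq υ]

/-- Well-formedness: `ord` is a partial order on `S`, `A ⊆ S × U`, and every
constraint `(T, Θ)` has `T ⊆ S` and `Θ` a set of functions from `T` to `U`. -/
def WellFormed (W : WAP σ υ) : Prop :=
  (∀ s ∈ W.S, W.ord s s) ∧
  (∀ s₁ ∈ W.S, ∀ s₂ ∈ W.S, W.ord s₁ s₂ → W.ord s₂ s₁ → s₁ = s₂) ∧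
  (∀ s₁ ∈ W.S, ∀ s₂ ∈ W.S, ∀ s₃ ∈ W.S, W.ord s₁ s₂ → W.ord s₂ s₃ → W.ord s₁ s₃) ∧
  (∀ p ∈ W.A, p.1 ∈ W.S ∧ p.2 ∈ W.U) ∧
  (∀ c ∈ W.C, c.1 ⊆ W.S ∧
    ∀ θ ∈ c.2, (∀ s, θ s ≠ none ↔ s ∈ c.1) ∧ ∀ s u, θ s = some u → u ∈ W.U)

/-- A partial plan: a partial function from `S` to `U` whose domain is
causally closed (if `s₁` is assigned and `s₂ ≺ s₁` then `s₂` is assigned). -/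
def IsPartialPlan (W : WAP σ υ) (θ : σ → Option υ) : Prop :=
  (∀ s u, θ s = some u → s ∈ W.S ∧ u ∈ W.U) ∧
  ∀ s₁ s₂, s₁ ∈ W.S → s₂ ∈ W.S → θ s₁ ≠ none → W.ord s₂ s₁ → s₂ ≠ s₁ → θ s₂ ≠ none

/-- Restriction of a partial plan to a set `T` of steps. -/
def restrictTo (θ : σ → Option υ) (T : Finset σ) : σ → Option υ :=
  fun s => if s ∈ T then θ s else none

/-- Validity of a (partial) plan: every assignment is authorized, and every
constraint whose step set is contained in the domain is satisfied. -/
def Valid (W : WAP σ υ) (θ : σ → Option υ) : Prop :=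
  (∀ s u, θ s = some u → (s, u) ∈ W.A) ∧
  ∀ c ∈ W.C, (∀ s ∈ c.1, θ s ≠ none) → restrictTo θ c.1 ∈ c.2

/-- A plan: a partial plan whose domain is all of `S`. -/
def IsPlan (W : WAP σ υ) (θ : σ → Option υ) : Prop :=
  W.IsPartialPlan θ ∧ ∀ s ∈ W.S, θ s ≠ none

def IsValidPlan (W : WAP σ υ) (θ : σ → Option υ) : Prop :=
  W.IsPlan θ ∧ W.Valid θ

/-- `θ` assigns no user from `Δ`. -/
def Avoids (θ : σ → Option υ) (Δ : Finset υ) : Prop :=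
  ∀ s u, θ s = some u → u ∉ Δ

/-- Static resiliency for budget `t`. -/
def StaticallyResilient (W : WAP σ υ) (t : ℕ) : Prop :=
  ∀ Δ : Finset υ, Δ ⊆ W.U → Δ.card ≤ t → ∃ θ, W.IsValidPlan θ ∧ Avoids θ Δ

/-- A move of Player 1: assign a user `u ∈ U ∖ Δ` to a not-yet-assigned step,
so that the result remains a causally closed partial plan and remains valid
(if the extension were invalid, Player 2 would win at once). -/
def P1Move (W : WAP σ υ) (Δ : Finset υ) (θ θ' : σ → Option υ) : Prop :=
  ∃ s u, s ∈ W.S ∧ θ s = none ∧ u ∈ W.U ∧ u ∉ Δ ∧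
    θ' = Function.update θ s (some u) ∧
    W.IsPartialPlan θ' ∧ W.Valid θ'

/-- A move of Player 2 in the one-shot resiliency game: either pass, or
(if it has not yet struck) strike, adding at most `t` users of `U` to `Δ`. -/
def OneShotP2Move (W : WAP σ υ) (t : ℕ) (Δ : Finset υ) (struck : Bool)
    (Δ' : Finset υ) (struck' : Bool) : Prop :=
  (Δ' = Δ ∧ struck' = struck) ∨
  (struck = false ∧ struck' = true ∧ Δ ⊆ Δ' ∧ Δ' ⊆ W.U ∧ (Δ' \ Δ).card ≤ t)

/-- Player 1 can force a win of the one-shot resiliency game within `n`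
more rounds, from the given configuration (`struck` records whether
Player 2 has already struck).  Player 1 has won once the (valid) partial
plan has been extended to a valid plan on all of `S`; otherwise, for every
move of Player 2 there must be a move of Player 1 from which Player 1 can
still force a win.  Since each round assigns one more step, the game from
the initial configuration lasts at most `|S|` rounds. -/
def OneShotWins (W : WAP σ υ) (t : ℕ) :
    ℕ → Finset υ → (σ → Option υ) → Bool → Prop
  | 0, _, θ, _ => (∀ s ∈ W.S, θ s ≠ none) ∧ W.IsPartialPlan θ ∧ W.Valid θ
  | n + 1, Δ, θ, struck =>
      ((∀ s ∈ W.S, θ s ≠ none) ∧ W.IsPartialPlan θ ∧ W.Valid θ) ∨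
      ((∃ s ∈ W.S, θ s = none) ∧
        ∀ Δ' struck', OneShotP2Move W t Δ struck Δ' struck' →
          ∃ θ', P1Move W Δ' θ θ' ∧ OneShotWins W t n Δ' θ' struck')

/-- One-shot resiliency for budget `t`: Player 1 wins the one-shot
resiliency game (from the initial configuration `(∅, ∅)`) no matter how
Player 2 plays. -/
def OneShotResilient (W : WAP σ υ) (t : ℕ) : Prop :=
  OneShotWins W t W.S.card ∅ (fun _ => none) false

/-- A move of Player 2 in the decremental resiliency game: add zero or more
users of `U` to `Δ`, subject to `|Δ| ≤ t` throughout. -/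
def DecP2Move (W : WAP σ υ) (t : ℕ) (Δ Δ' : Finset υ) : Prop :=
  Δ ⊆ Δ' ∧ Δ' ⊆ W.U ∧ Δ'.card ≤ t

/-- Player 1 can force a win of the decremental resiliency game within `n`
more rounds. -/
def DecWins (W : WAP σ υ) (t : ℕ) : ℕ → Finset υ → (σ → Option υ) → Prop
  | 0, _, θ => (∀ s ∈ W.S, θ s ≠ none) ∧ W.IsPartialPlan θ ∧ W.Valid θ
  | n + 1, Δ, θ =>
      ((∀ s ∈ W.S, θ s ≠ none) ∧ W.IsPartialPlan θ ∧ W.Valid θ) ∨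
      ((∃ s ∈ W.S, θ s = none) ∧
        ∀ Δ', DecP2Move W t Δ Δ' →
          ∃ θ', P1Move W Δ' θ θ' ∧ DecWins W t n Δ' θ')

/-- Decremental resiliency for budget `t`: Player 1 wins the decremental
resiliency game no matter how Player 2 plays. -/
def DecrementallyResilient (W : WAP σ υ) (t : ℕ) : Prop :=
  DecWins W t W.S.card ∅ (fun _ => none)

end WAP
section PhiConstruction

open WAP

/-- A step of `W_φ`: `Sum.inl i` is `x_{i+1}`, `Sum.inr (Sum.inl i)` is
`y_{i+1}`, and `Sum.inr (Sum.inr l)` is `z_{l+1}` (0-indexed). -/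
abbrev StepPhi (n m : ℕ) := Sum (Fin n) (Sum (Fin n) (Fin m))

/-- A user of `W_φ`: `Sum.inl (b, i)` is a `⊤/⊥`-variant user (`⊤` iff
`b = true`) with index `i`, and `Sum.inr (b, j)` is a `t/f`-variant user
(`t` iff `b = true`) with index `j`. -/
abbrev UserPhi := Sum (Bool × ℕ) (Bool × ℕ)

/-- The rank of a step in the linear order `x₁ ≺ ⋯ ≺ x_n ≺ y₁ ≺ ⋯ ≺ y_n ≺
z₁ ≺ ⋯ ≺ z_m`. -/
def rankPhi {n m : ℕ} : StepPhi n m → ℕ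
  | Sum.inl i => i.1
  | Sum.inr (Sum.inl i) => n + i.1
  | Sum.inr (Sum.inr l) => n + n + l.1

/-- `U_bool = {(⊥,i), (⊤,i) : 1 ≤ i ≤ n+1}`. -/
def UboolFin (n : ℕ) : Finset UserPhi :=
  ((({false, true} : Finset Bool)) ×ˢ Finset.Icc 1 (n + 1)).image Sum.inl

/-- `U_star = {(f,1),(t,2),(f,3),(t,4),…,(f,2n−1),(t,2n)}`: the user with
index `j` represents `t` exactly when `j` is even. -/
def UstarFin (n : ℕ) : Finset UserPhi :=
  (Finset.Icc 1 (2 * n)).image (fun j => Sum.inr (decide (j % 2 = 0), j))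

/-- The truth value represented by `θ` at an `x`-step (true iff a `⊤`-user). -/
def xVal {n m : ℕ} (θ : StepPhi n m → Option UserPhi) (i : Fin n) : Bool :=
  match θ (Sum.inl i) with
  | some (Sum.inl (b, _)) => b
  | _ => false

/-- The truth value represented by `θ` at a `y`-step (true iff a `t`-user). -/
def yVal {n m : ℕ} (θ : StepPhi n m → Option UserPhi) (i : Fin n) : Bool :=
  match θ (Sum.inr (Sum.inl i)) with
  | some (Sum.inr (b, _)) => b
  | _ => false

/-- The truth value represented by `θ` at a `z`-step (true iff a `⊤`-user). -/
def zVal {n m : ℕ} (θ : StepPhi n m → Option UserPhi) (l : Fin m) : Bool :=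
  match θ (Sum.inr (Sum.inr l)) with
  | some (Sum.inl (b, _)) => b
  | _ => false

/-- The workflow authorization policy `W_φ` (the combinatorial core of the
paper's Σ₃ᵖ-hardness reduction): steps `x₁ ≺ ⋯ ≺ x_n ≺ y₁ ≺ ⋯ ≺ y_n ≺ z₁ ≺ ⋯
≺ z_m`; users `U_bool ∪ U_star`; `x`- and `z`-steps may be assigned any
`U_bool` user and `y`-steps any `U_star` user; constraints: the ordering
constraints on consecutive `y`-steps (indices in `U_star` strictly
increasing) plus the global constraint `(S, Θ_φ)`. -/
def WPhi (n m : ℕ)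
    (φ : (Fin n → Bool) → (Fin n → Bool) → (Fin m → Bool) → Prop) :
    WAP (StepPhi n m) UserPhi :=
  { S := Finset.univ
    ord := fun a b => rankPhi a ≤ rankPhi b
    U := UboolFin n ∪ UstarFin n
    A := {p | match p.1 with
              | Sum.inr (Sum.inl _) => p.2 ∈ UstarFin n
              | _ => p.2 ∈ UboolFin n}
    C := {c | ∃ (i : Fin n) (h : i.1 + 1 < n),
            c = (({Sum.inr (Sum.inl i), Sum.inr (Sum.inl ⟨i.1 + 1, h⟩)} :
                    Finset (StepPhi n m)),
                 {θ | (∀ x, θ x ≠ none ↔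
                        x ∈ ({Sum.inr (Sum.inl i),
                              Sum.inr (Sum.inl ⟨i.1 + 1, h⟩)} :
                               Finset (StepPhi n m))) ∧
                      (∀ x v, θ x = some v → v ∈ UboolFin n ∪ UstarFin n) ∧
                      ∃ b₁ j₁ b₂ j₂,
                        θ (Sum.inr (Sum.inl i)) = some (Sum.inr (b₁, j₁)) ∧
                        θ (Sum.inr (Sum.inl ⟨i.1 + 1, h⟩)) =
                          some (Sum.inr (b₂, j₂)) ∧
                        j₁ < j₂})} ∪
        {((Finset.univ : Finset (StepPhi n m)),
          {θ | (∀ x, θ x ≠ none) ∧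
               (∀ x v, θ x = some v → v ∈ UboolFin n ∪ UstarFin n) ∧
               φ (xVal θ) (yVal θ) (zVal θ)})} }

end PhiConstruction

/-!
If some `x` works, Player 1 assigns `x` to the `x`-steps and intends to give the `y`-steps the
`U_star` indices `1, …, n`. When Player 2 strikes (at most `n` users) after `c` of the `y`-steps,
the `2n - c` indices above `c` still contain `n - c` unstruck ones, which Player 1 uses in
increasing order; `U_bool` has `n + 1` users of each kind, so some index serves both values on the
`x`- and `z`-steps, and the `z`-values are a witness for the `y` that Player 1 ends up encoding.

Conversely, Player 2 waits until the `x`-steps are assigned and then strikes all `U_star` users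
except the `n` users `2i + 1` or `2i + 2` that encode a chosen `y`. The ordering constraints force
the `y`-steps onto exactly these users, so the final plan witnesses `φ x y z` for some `z`.
-/

namespace WAP

variable {σ υ : Type} [DecidableEq σ] {W : WAP σ υ} {t : ℕ}
  {Δ : Finset υ} {θ θ' : σ → Option υ}

theorem P1Move.apply_eq_some (h : W.P1Move Δ θ θ') {s : σ} {u : υ} (hs : θ s = some u) :
    θ' s = some u := by
  obtain ⟨s₀, u₀, -, hs₀, -, -, rfl, -⟩ := h
  have hne : s ≠ s₀ := by rintro rfl; simp [hs₀] at hs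
  rwa [Function.update_of_ne hne]

theorem P1Move.not_mem_of_apply_eq_none (h : W.P1Move Δ θ θ') {s : σ} {u : υ}
    (hs : θ s = none) (hs' : θ' s = some u) : u ∉ Δ := by
  obtain ⟨s₀, u₀, -, -, -, hu₀, rfl, -⟩ := h
  by_cases hs₀ : s = s₀ <;> simp_all

/-- Player 2 plays `hmv` and then passes for the rest of the game. -/
theorem OneShotWins.exists_isValidPlan [DecidableEq υ] {f : ℕ} {Δ' : Finset υ} {b b' : Bool}
    (h : W.OneShotWins t f Δ θ b) (hmv : W.OneShotP2Move t Δ b Δ' b') :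
    ∃ θf, W.IsValidPlan θf ∧ (∀ s u, θ s = some u → θf s = some u) ∧
      ∀ s u, θ s = none → θf s = some u → u ∉ Δ' := by
  induction f generalizing Δ Δ' θ b b' with
  | zero =>
    obtain ⟨htot, hplan, hvalid⟩ := h
    exact ⟨θ, ⟨⟨hplan, htot⟩, hvalid⟩, fun _ _ => id, by simp_all⟩
  | succ f ih =>
    rcases h with ⟨htot, hplan, hvalid⟩ | ⟨-, hplay⟩
    · exact ⟨θ, ⟨⟨hplan, htot⟩, hvalid⟩, fun _ _ => id, by simp_all⟩
    obtain ⟨θ', hmove, hwin⟩ := hplay Δ' b' hmv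
    obtain ⟨θf, hθf, hext, hfresh⟩ := ih hwin (Or.inl ⟨rfl, rfl⟩)
    refine ⟨θf, hθf, fun s u hs => hext s u (hmove.apply_eq_some hs), fun s u hs hsf => ?_⟩
    cases hs' : θ' s with
    | none => exact hfresh s u hs' hsf
    | some v =>
      obtain rfl : u = v := Option.some.inj ((hext s v hs').symm.trans hsf).symm
      exact hmove.not_mem_of_apply_eq_none hs hs'

end WAP

def starUser (j : ℕ) : UserPhi := Sum.inr (decide (j % 2 = 0), j)

theorem starUser_injective : Function.Injective starUser := by
  intro a b h
  simp only [starUser, Sum.inr.injEq, Prod.mk.injEq] at h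
  exact h.2

theorem mem_UstarFin {n : ℕ} {u : UserPhi} :
    u ∈ UstarFin n ↔ ∃ j ∈ Finset.Icc 1 (2 * n), starUser j = u :=
  Finset.mem_image

theorem starUser_mem_UstarFin {n j : ℕ} : starUser j ∈ UstarFin n ↔ j ∈ Finset.Icc 1 (2 * n) :=
  Finset.mem_image.trans ⟨fun ⟨_, hi, h⟩ => starUser_injective h ▸ hi, fun h => ⟨j, h, rfl⟩⟩

theorem card_UstarFin (n : ℕ) : (UstarFin n).card = 2 * n := by
  change (Finset.image starUser _).card = _
  rw [Finset.card_image_of_injective _ starUser_injective]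
  simp

theorem inl_mem_UboolFin {n j : ℕ} {b : Bool} :
    (Sum.inl (b, j) : UserPhi) ∈ UboolFin n ↔ j ∈ Finset.Icc 1 (n + 1) := by
  cases b <;> simp [UboolFin]

theorem exists_index_inl_not_mem {n : ℕ} {Δ : Finset UserPhi} (hΔ : Δ.card ≤ n) :
    ∃ j ∈ Finset.Icc 1 (n + 1), ∀ b : Bool, (Sum.inl (b, j) : UserPhi) ∉ Δ := by
  by_contra! h
  choose! b hb using h
  have := Finset.card_le_card_of_injOn (fun j => (Sum.inl (b j, j) : UserPhi)) hb
    (fun i _ j _ h => by simp_all)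
  simp at this
  omega

theorem Fin.strictMono_of_lt_succ {k : ℕ} {f : Fin k → ℕ}
    (h : ∀ (i : Fin k) (hi : i.1 + 1 < k), f i < f ⟨i.1 + 1, hi⟩) : StrictMono f := by
  cases k with
  | zero => exact fun a => a.elim0
  | succ k => exact Fin.strictMono_iff_lt_succ.2 fun i => h i.castSucc (by simp)

theorem eq_of_strictMono_of_forall_mem_range {α : Type*} [LinearOrder α] {k : ℕ}
    {f g : Fin k → α} (hf : StrictMono f) (hg : StrictMono g) (h : ∀ i, f i ∈ Set.range g) :
    f = g := by
  classical
  have hcard : (Finset.univ.image g).card = k := by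
    rw [Finset.card_image_of_injective _ hg.injective, Finset.card_univ, Fintype.card_fin]
  have hfmem : ∀ i, f i ∈ Finset.univ.image g := fun i => by
    obtain ⟨j, hj⟩ := h i
    exact Finset.mem_image.2 ⟨j, Finset.mem_univ j, hj⟩
  exact (Finset.orderEmbOfFin_unique hcard hfmem hf).trans
    (Finset.orderEmbOfFin_unique hcard
      (fun i => Finset.mem_image_of_mem g (Finset.mem_univ i)) hg).symm

namespace WPhi

open WAP

variable {n m : ℕ} {φ : (Fin n → Bool) → (Fin n → Bool) → (Fin m → Bool) → Prop}

theorem rankPhi_lt (s : StepPhi n m) : rankPhi s < n + (n + m) := by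
  rcases s with i | i | l <;> simp only [rankPhi] <;> omega

theorem rankPhi_injective : Function.Injective (rankPhi (n := n) (m := m)) := by
  rintro (i | i | i) (j | j | j) h <;> simp only [rankPhi] at h <;>
    first
      | (have := i.2; have := j.2; omega)
      | simp only [Sum.inl.injEq, Sum.inr.injEq, Fin.ext_iff]; omega

theorem exists_rankPhi_eq {k : ℕ} (hk : k < n + (n + m)) :
    ∃ s : StepPhi n m, rankPhi s = k := by
  by_cases h₁ : k < n
  · exact ⟨.inl ⟨k, h₁⟩, rfl⟩
  by_cases h₂ : k < n + n
  · exact ⟨.inr (.inl ⟨k - n, by omega⟩), by simp only [rankPhi]; omega⟩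
  · exact ⟨.inr (.inr ⟨k - (n + n), by omega⟩), by simp only [rankPhi]; omega⟩

theorem card_S : (WPhi n m φ).S.card = n + (n + m) := by
  change (Finset.univ : Finset (StepPhi n m)).card = _
  rw [Finset.card_univ]
  simp

theorem mem_U_of_mem_A {s : StepPhi n m} {u : UserPhi} (h : (s, u) ∈ (WPhi n m φ).A) :
    u ∈ (WPhi n m φ).U := by
  rcases s with i | i | l
  · exact Finset.mem_union_left _ h
  · exact Finset.mem_union_right _ h
  · exact Finset.mem_union_left _ h

theorem restrictTo_univ (θ : StepPhi n m → Option UserPhi) : restrictTo θ Finset.univ = θ :=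
  funext fun s => if_pos (Finset.mem_univ s)

theorem exists_starUser_of_isValidPlan {θ : StepPhi n m → Option UserPhi}
    (h : (WPhi n m φ).IsValidPlan θ) :
    ∃ j : Fin n → ℕ, StrictMono j ∧
      ∀ i, j i ∈ Finset.Icc 1 (2 * n) ∧ θ (.inr (.inl i)) = some (starUser (j i)) := by
  obtain ⟨⟨-, htot⟩, hauth, hcons⟩ := h
  have hy : ∀ i, ∃ j ∈ Finset.Icc 1 (2 * n), θ (.inr (.inl i)) = some (starUser j) := by
    intro i
    obtain ⟨u, hu⟩ := Option.ne_none_iff_exists'.1 (htot _ (Finset.mem_univ _))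
    obtain ⟨j, hj, rfl⟩ := mem_UstarFin.1 (hauth (.inr (.inl i)) u hu)
    exact ⟨j, hj, hu⟩
  choose j hj hθj using hy
  refine ⟨j, Fin.strictMono_of_lt_succ fun i hi => ?_, fun i => ⟨hj i, hθj i⟩⟩
  obtain ⟨-, -, b₁, j₁, b₂, j₂, h₁, h₂, hlt⟩ :=
    hcons _ (Or.inl ⟨i, hi, rfl⟩) fun s _ => htot s (Finset.mem_univ s)
  simp only [restrictTo, Finset.mem_insert, Finset.mem_singleton, true_or, or_true,
    if_true, hθj, starUser, Option.some.injEq, Sum.inr.injEq, Prod.mk.injEq] at h₁ h₂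
  omega

theorem phi_of_isValidPlan {θ : StepPhi n m → Option UserPhi}
    (h : (WPhi n m φ).IsValidPlan θ) : φ (xVal θ) (yVal θ) (zVal θ) := by
  obtain ⟨⟨-, htot⟩, -, hcons⟩ := h
  simpa [restrictTo_univ] using
    (hcons _ (Or.inr rfl) fun s _ => htot s (Finset.mem_univ s)).2.2

theorem isValidPlan_of {θ : StepPhi n m → Option UserPhi}
    (hx : ∀ i, ∃ u ∈ UboolFin n, θ (.inl i) = some u)
    (hy : ∃ j : Fin n → ℕ, StrictMono j ∧
      ∀ i, j i ∈ Finset.Icc 1 (2 * n) ∧ θ (.inr (.inl i)) = some (starUser (j i)))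
    (hz : ∀ l, ∃ u ∈ UboolFin n, θ (.inr (.inr l)) = some u)
    (hφ : φ (xVal θ) (yVal θ) (zVal θ)) :
    (WPhi n m φ).IsValidPlan θ := by
  obtain ⟨j, hj, hjθ⟩ := hy
  have hsome : ∀ s, ∃ u, (s, u) ∈ (WPhi n m φ).A ∧ θ s = some u := by
    rintro (i | i | l)
    · exact hx i
    · exact ⟨_, starUser_mem_UstarFin.2 (hjθ i).1, (hjθ i).2⟩
    · exact hz l
  have hauth : ∀ s u, θ s = some u → (s, u) ∈ (WPhi n m φ).A := fun s u hu => by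
    obtain ⟨v, hv, hθv⟩ := hsome s
    obtain rfl : u = v := Option.some.inj (hu.symm.trans hθv)
    exact hv
  have htot : ∀ s, θ s ≠ none := fun s => by
    obtain ⟨u, -, hu⟩ := hsome s
    simp [hu]
  have husers : ∀ s u, θ s = some u → u ∈ (WPhi n m φ).U := fun s u hu =>
    mem_U_of_mem_A (hauth s u hu)
  refine ⟨⟨⟨fun s u hu => ⟨Finset.mem_univ s, husers s u hu⟩, fun _ s _ _ _ _ _ => htot s⟩,
    fun s _ => htot s⟩, hauth, ?_⟩
  rintro c (⟨i, hi, rfl⟩ | rfl) -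
  · refine ⟨fun s => ?_, fun s u hu => ?_, ?_⟩
    · simp only [restrictTo]
      split_ifs with hs <;> simp [hs, htot s]
    · simp only [restrictTo] at hu
      split_ifs at hu
      exact husers s u hu
    · refine ⟨decide (j i % 2 = 0), j i, decide (j ⟨i.1 + 1, hi⟩ % 2 = 0), j ⟨i.1 + 1, hi⟩,
        ?_, ?_, hj (Fin.mk_lt_mk.2 (Nat.lt_succ_self _))⟩ <;>
        simp [restrictTo, (hjθ _).2, starUser]
  · rw [restrictTo_univ]
    exact ⟨htot, husers, hφ⟩

def rankPrefix (θ : StepPhi n m → Option UserPhi) (k : ℕ) : StepPhi n m → Option UserPhi :=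
  fun s => if rankPhi s < k then θ s else none

theorem rankPrefix_zero (θ : StepPhi n m → Option UserPhi) : rankPrefix θ 0 = fun _ => none :=
  rfl

theorem rankPrefix_of_le {θ : StepPhi n m → Option UserPhi} {k : ℕ} (hk : n + (n + m) ≤ k) :
    rankPrefix θ k = θ :=
  funext fun s => if_pos ((rankPhi_lt s).trans_le hk)

theorem rankPrefix_eq_none {θ : StepPhi n m → Option UserPhi} {k : ℕ} {s : StepPhi n m}
    (hs : rankPhi s = k) : rankPrefix θ k s = none :=
  if_neg hs.not_lt

variable {Δ : Finset UserPhi} {P : StepPhi n m → Option UserPhi} {k : ℕ}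

theorem apply_eq_some_of_rankPrefix {s : StepPhi n m} {u : UserPhi}
    (h : rankPrefix P k s = some u) : P s = some u := by
  simp only [rankPrefix] at h
  split_ifs at h
  exact h

theorem isPartialPlan_rankPrefix (hP : (WPhi n m φ).IsValidPlan P) :
    (WPhi n m φ).IsPartialPlan (rankPrefix P k) := by
  refine ⟨fun s u hs => hP.1.1.1 s u (apply_eq_some_of_rankPrefix hs),
    fun s₁ s₂ _ hs₂ h₁ hle _ => ?_⟩
  simp only [rankPrefix, ne_eq, ite_eq_right_iff, not_forall] at h₁ ⊢
  exact ⟨lt_of_le_of_lt hle h₁.1, hP.1.2 s₂ hs₂⟩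

theorem valid_rankPrefix (hP : (WPhi n m φ).IsValidPlan P) :
    (WPhi n m φ).Valid (rankPrefix P k) := by
  refine ⟨fun s u hs => hP.2.1 s u (apply_eq_some_of_rankPrefix hs), fun c hc hdom => ?_⟩
  have hagree : restrictTo (rankPrefix P k) c.1 = restrictTo P c.1 := funext fun s => by
    by_cases hs : s ∈ c.1
    · have hlt : rankPhi s < k := by
        by_contra h
        exact hdom s hs (if_neg h)
      simp [restrictTo, rankPrefix, hs, hlt]
    · simp [restrictTo, hs]
  rw [hagree]
  exact hP.2.2 c hc fun s _ => hP.1.2 s (Finset.mem_univ s)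

theorem p1Move_rankPrefix (hP : (WPhi n m φ).IsValidPlan P) (hk : k < n + (n + m))
    (hΔ : ∀ s u, k ≤ rankPhi s → P s = some u → u ∉ Δ) :
    (WPhi n m φ).P1Move Δ (rankPrefix P k) (rankPrefix P (k + 1)) := by
  obtain ⟨s₀, hs₀⟩ := exists_rankPhi_eq hk
  obtain ⟨u, hu⟩ := Option.ne_none_iff_exists'.1 (hP.1.2 s₀ (Finset.mem_univ s₀))
  refine ⟨s₀, u, Finset.mem_univ s₀, rankPrefix_eq_none hs₀, (hP.1.1.1 s₀ u hu).2,
    hΔ s₀ u hs₀.ge hu, funext fun s => ?_, isPartialPlan_rankPrefix hP, valid_rankPrefix hP⟩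
  rcases eq_or_ne s s₀ with rfl | hne
  · simp [rankPrefix, hs₀, hu]
  · have : rankPhi s ≠ k := fun h => hne (rankPhi_injective (h.trans hs₀.symm))
    simp only [rankPrefix, Function.update_of_ne hne,
      show rankPhi s < k + 1 ↔ rankPhi s < k by omega]

theorem oneShotWins_rankPrefix_of_struck {t f : ℕ} (hP : (WPhi n m φ).IsValidPlan P)
    (hkf : k + f = n + (n + m)) (hΔ : ∀ s u, k ≤ rankPhi s → P s = some u → u ∉ Δ) :
    (WPhi n m φ).OneShotWins t f Δ (rankPrefix P k) true := by
  induction f generalizing k with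
  | zero =>
    rw [rankPrefix_of_le (k := k) (by omega)]
    exact ⟨hP.1.2, hP.1.1, hP.2⟩
  | succ f ih =>
    obtain ⟨s₀, hs₀⟩ := exists_rankPhi_eq (n := n) (m := m) (k := k) (by omega)
    refine Or.inr ⟨⟨s₀, Finset.mem_univ s₀, rankPrefix_eq_none hs₀⟩, ?_⟩
    rintro Δ' b' (⟨rfl, rfl⟩ | ⟨h, -⟩)
    · exact ⟨_, p1Move_rankPrefix hP (by omega) hΔ,
        ih (by omega) fun s u hs => hΔ s u (by omega)⟩
    · exact nomatch h

/-- Player 1 follows the plan `P₀` until Player 2 strikes, and then a plan that agrees with `P₀`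
on the steps assigned so far and avoids the struck users. -/
theorem oneShotWins_rankPrefix_of_forall_replan {t f : ℕ} {P₀ : StepPhi n m → Option UserPhi}
    (hP₀ : (WPhi n m φ).IsValidPlan P₀)
    (hreplan : ∀ k (Δ : Finset UserPhi), Δ.card ≤ t → ∃ P, (WPhi n m φ).IsValidPlan P ∧
      rankPrefix P k = rankPrefix P₀ k ∧ ∀ s u, k ≤ rankPhi s → P s = some u → u ∉ Δ)
    (hkf : k + f = n + (n + m)) :
    (WPhi n m φ).OneShotWins t f ∅ (rankPrefix P₀ k) false := by
  induction f generalizing k with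
  | zero =>
    rw [rankPrefix_of_le (k := k) (by omega)]
    exact ⟨hP₀.1.2, hP₀.1.1, hP₀.2⟩
  | succ f ih =>
    obtain ⟨s₀, hs₀⟩ := exists_rankPhi_eq (n := n) (m := m) (k := k) (by omega)
    refine Or.inr ⟨⟨s₀, Finset.mem_univ s₀, rankPrefix_eq_none hs₀⟩, ?_⟩
    rintro Δ b (⟨rfl, rfl⟩ | ⟨-, rfl, -, -, hcard⟩)
    · exact ⟨_, p1Move_rankPrefix hP₀ (by omega) (by simp), ih (by omega)⟩
    · obtain ⟨P, hP, hprefix, hΔ⟩ := hreplan k Δ (by simpa using hcard)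
      rw [← hprefix]
      exact ⟨_, p1Move_rankPrefix hP (by omega) hΔ,
        oneShotWins_rankPrefix_of_struck hP (by omega) fun s u hs => hΔ s u (by omega)⟩

def planOf (xs : Fin n → Bool) (zf : (Fin n → Bool) → Fin m → Bool) (g : Fin n → ℕ)
    (j : StepPhi n m → ℕ) : StepPhi n m → Option UserPhi
  | .inl i => some (.inl (xs i, j (.inl i)))
  | .inr (.inl i) => some (starUser (g i))
  | .inr (.inr l) => some (.inl (zf (fun i => decide (g i % 2 = 0)) l, j (.inr (.inr l))))

variable {xs : Fin n → Bool} {zf : (Fin n → Bool) → Fin m → Bool}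

theorem isValidPlan_planOf (hzf : ∀ y, φ xs y (zf y)) {g : Fin n → ℕ} (hg : StrictMono g)
    (hg₁ : ∀ i, g i ∈ Finset.Icc 1 (2 * n)) {j : StepPhi n m → ℕ}
    (hj : ∀ s, j s ∈ Finset.Icc 1 (n + 1)) :
    (WPhi n m φ).IsValidPlan (planOf xs zf g j) := by
  have hx : xVal (planOf xs zf g j) = xs := rfl
  have hy : yVal (planOf xs zf g j) = fun i => decide (g i % 2 = 0) := rfl
  have hz : zVal (planOf xs zf g j) = zf (fun i => decide (g i % 2 = 0)) := rfl
  refine isValidPlan_of (fun i => ⟨_, inl_mem_UboolFin.2 (hj _), rfl⟩)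
    ⟨g, hg, fun i => ⟨hg₁ i, rfl⟩⟩ (fun l => ⟨_, inl_mem_UboolFin.2 (hj _), rfl⟩) ?_
  rw [hx, hy, hz]
  exact hzf _

/-- After `c` of the `y`-steps have received the indices `1, …, c`, the remaining ones can still
receive increasing indices whose users avoid `Δ`: the `2n - c` indices above `c` lose at most
`|Δ| ≤ n` to `Δ`. -/
theorem exists_strictMono_starUser_not_mem {c : ℕ} (hc : c ≤ n) (hΔ : Δ.card ≤ n) :
    ∃ g : Fin n → ℕ, StrictMono g ∧ (∀ i, g i ∈ Finset.Icc 1 (2 * n)) ∧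
      (∀ i : Fin n, i.1 < c → g i = i.1 + 1) ∧ ∀ i : Fin n, c ≤ i.1 → starUser (g i) ∉ Δ := by
  set avail := (Finset.Icc (c + 1) (2 * n)).filter (starUser · ∉ Δ) with havail
  have hblocked : ((Finset.Icc (c + 1) (2 * n)).filter (starUser · ∈ Δ)).card ≤ Δ.card :=
    Finset.card_le_card_of_injOn starUser (fun a ha => (Finset.mem_filter.1 ha).2)
      starUser_injective.injOn
  have hcard : n - c ≤ avail.card := by
    have := Finset.card_filter_add_card_filter_not (s := Finset.Icc (c + 1) (2 * n))
      (p := (starUser · ∈ Δ))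
    simp only [Nat.card_Icc] at this
    rw [havail]
    omega
  set f := avail.orderEmbOfCardLe hcard
  have hf (a : Fin (n - c)) : f a ∈ Finset.Icc (c + 1) (2 * n) ∧ starUser (f a) ∉ Δ :=
    Finset.mem_filter.1 (avail.orderEmbOfCardLe_mem hcard a)
  refine ⟨fun i => if h : i.1 < c then i.1 + 1 else f ⟨i.1 - c, by omega⟩, ?_, fun i => ?_,
    fun i hi => dif_pos hi, fun i hi => ?_⟩
  · intro a b hab
    have hab' : a.1 < b.1 := hab
    dsimp only
    split_ifs with ha hb hb
    · omega
    · have := (hf ⟨b.1 - c, by omega⟩).1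
      simp only [Finset.mem_Icc] at this
      omega
    · omega
    · exact f.strictMono (Fin.mk_lt_mk.2 (by omega))
  · dsimp only
    split_ifs with h
    · simp only [Finset.mem_Icc]
      omega
    · have := (hf ⟨i.1 - c, by omega⟩).1
      simp only [Finset.mem_Icc] at this ⊢
      omega
  · simp only [dif_neg (not_lt.2 hi)]
    exact (hf _).2

abbrev initialPlan (xs : Fin n → Bool) (zf : (Fin n → Bool) → Fin m → Bool) :
    StepPhi n m → Option UserPhi :=
  planOf xs zf (fun i => i.1 + 1) fun _ => 1

/-- A strike of at most `n` users after `k` rounds can be answered by a plan that keeps the first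
`k` steps of the initial plan: the `x`- and `z`-steps switch to an index `j₀` for which neither
`(⊥, j₀)` nor `(⊤, j₀)` was struck. -/
theorem exists_replan (hzf : ∀ y, φ xs y (zf y)) (k : ℕ) (hΔ : Δ.card ≤ n) :
    ∃ P, (WPhi n m φ).IsValidPlan P ∧ rankPrefix P k = rankPrefix (initialPlan xs zf) k ∧
      ∀ s u, k ≤ rankPhi s → P s = some u → u ∉ Δ := by
  obtain ⟨j₀, hj₀, hj₀Δ⟩ := exists_index_inl_not_mem hΔ
  obtain ⟨g, hg, hg₁, hg_lt, hgΔ⟩ :=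
    exists_strictMono_starUser_not_mem (c := min (k - n) n) (min_le_right _ _) hΔ
  refine ⟨planOf xs zf g fun s => if rankPhi s < k then 1 else j₀,
    isValidPlan_planOf hzf hg hg₁ fun s => ?_, funext fun s => ?_, ?_⟩
  · split_ifs
    · simp
    · exact hj₀
  · simp only [rankPrefix]
    split_ifs with h
    · rcases s with i | i | l <;> simp only [planOf, h, if_true] <;> simp only [rankPhi] at h
      · rw [hg_lt i (by omega)]
      · have hy : (fun i : Fin n => decide (g i % 2 = 0)) = fun i => decide ((i.1 + 1) % 2 = 0) :=
          funext fun i => by rw [hg_lt i (by omega)]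
        rw [hy]
    · rfl
  · rintro (i | i | l) u hk hu <;> simp only [rankPhi, planOf, Option.some.injEq] at hk hu <;>
      subst hu
    · simpa [show ¬ i.1 < k by omega] using hj₀Δ _
    · exact hgΔ i (by omega)
    · simpa [show ¬ n + n + l.1 < k by omega] using hj₀Δ _

theorem oneShotResilient_of_exists (h : ∃ x, ∀ y, ∃ z, φ x y z) :
    (WPhi n m φ).OneShotResilient n := by
  obtain ⟨xs, hxs⟩ := h
  choose zf hzf using hxs
  have hinit : (WPhi n m φ).IsValidPlan (initialPlan xs zf) :=
    isValidPlan_planOf hzf (fun a b hab => by simpa using hab)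
      (fun i => by simp only [Finset.mem_Icc]; omega) fun _ => by simp
  have := oneShotWins_rankPrefix_of_forall_replan hinit
    (fun k _ hΔ => exists_replan hzf k hΔ) (k := 0) (f := n + (n + m)) (by omega)
  rwa [rankPrefix_zero, ← card_S] at this

theorem p1Move_domain {θ θ' : StepPhi n m → Option UserPhi}
    (hθ : ∀ s, θ s ≠ none ↔ rankPhi s < k) (hk : k < n + (n + m))
    (h : (WPhi n m φ).P1Move Δ θ θ') : ∀ s, θ' s ≠ none ↔ rankPhi s < k + 1 := by
  obtain ⟨s₀, u, -, hs₀, -, -, rfl, hplan, -⟩ := h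
  have hrank : rankPhi s₀ = k := by
    have := mt (hθ s₀).2 (not_not.2 hs₀)
    by_contra hne
    obtain ⟨s, hs⟩ := exists_rankPhi_eq hk
    have hne' : s ≠ s₀ := by rintro rfl; omega
    have := hplan.2 s₀ s (Finset.mem_univ _) (Finset.mem_univ _) (by simp)
      (show rankPhi s ≤ rankPhi s₀ by omega) hne'
    rw [Function.update_of_ne hne'] at this
    exact ((hθ s).1 this).ne hs
  intro s
  rcases eq_or_ne s s₀ with rfl | hne
  · simp [hrank]
  · rw [Function.update_of_ne hne, hθ s]
    have := rankPhi_injective.ne hne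
    omega

/-- Player 2 passes for the first `k` rounds. -/
theorem exists_oneShotWins_of_le {t : ℕ} (hres : (WPhi n m φ).OneShotResilient t)
    (hk : k ≤ n + (n + m)) :
    ∃ θ, (∀ s, θ s ≠ none ↔ rankPhi s < k) ∧
      (WPhi n m φ).OneShotWins t (n + (n + m) - k) ∅ θ false := by
  induction k with
  | zero => exact ⟨fun _ => none, by simp, by rwa [← card_S (φ := φ)]⟩
  | succ k ih =>
    obtain ⟨θ, hθ, hwin⟩ := ih (by omega)
    rw [show n + (n + m) - k = n + (n + m) - (k + 1) + 1 by omega] at hwin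
    obtain ⟨s₀, hs₀⟩ := exists_rankPhi_eq (n := n) (m := m) (k := k) (by omega)
    rcases hwin with ⟨htot, -⟩ | ⟨-, hplay⟩
    · exact absurd ((hθ s₀).1 (htot s₀ (Finset.mem_univ s₀))) (by omega)
    · obtain ⟨θ', hmove, hwin'⟩ := hplay ∅ false (Or.inl ⟨rfl, rfl⟩)
      exact ⟨θ', p1Move_domain hθ (by omega) hmove, hwin'⟩

/-- Of `2i + 1` (an `f`-user) and `2i + 2` (a `t`-user), the index encoding `y i`. -/
def yIndex (y : Fin n → Bool) (i : Fin n) : ℕ := 2 * i.1 + if y i then 2 else 1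

theorem strictMono_yIndex (y : Fin n → Bool) : StrictMono (yIndex y) := by
  intro a b hab
  have : a.1 < b.1 := hab
  simp only [yIndex]
  split_ifs <;> omega

theorem yIndex_mem_Icc (y : Fin n → Bool) (i : Fin n) : yIndex y i ∈ Finset.Icc 1 (2 * n) := by
  have := i.2
  simp only [yIndex, Finset.mem_Icc]
  split_ifs <;> omega

theorem decide_yIndex_mod_two (y : Fin n → Bool) (i : Fin n) :
    decide (yIndex y i % 2 = 0) = y i := by
  simp only [yIndex]
  split_ifs with h <;> simp [h]

/-- Striking every `U_star` user except those encoding `y` forces the `y`-steps of a valid plan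
to encode `y`: their indices increase, and only `n` indices are left. -/
theorem yVal_eq_of_isValidPlan {θ : StepPhi n m → Option UserPhi} {y : Fin n → Bool}
    (hθ : (WPhi n m φ).IsValidPlan θ)
    (hΔ : ∀ i u, θ (.inr (.inl i)) = some u →
      u ∉ UstarFin n \ Finset.univ.image (starUser ∘ yIndex y)) :
    yVal θ = y := by
  obtain ⟨j, hj, hjθ⟩ := exists_starUser_of_isValidPlan hθ
  have hrange : ∀ i, j i ∈ Set.range (yIndex y) := fun i => by
    have hmem := hΔ i _ (hjθ i).2
    simp only [Finset.mem_sdiff, starUser_mem_UstarFin.2 (hjθ i).1, true_and, not_not,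
      Finset.mem_image, Finset.mem_univ, Function.comp_apply] at hmem
    obtain ⟨i', hi'⟩ := hmem
    exact ⟨i', starUser_injective hi'⟩
  have hjy := eq_of_strictMono_of_forall_mem_range hj (strictMono_yIndex y) hrange
  funext i
  simp [yVal, (hjθ i).2, starUser, hjy, decide_yIndex_mod_two]

theorem exists_of_oneShotResilient (hres : (WPhi n m φ).OneShotResilient n) :
    ∃ x, ∀ y, ∃ z, φ x y z := by
  obtain ⟨θ, hθ, hwin⟩ := exists_oneShotWins_of_le hres (k := n) (by omega)
  refine ⟨xVal θ, fun y => ?_⟩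
  set K := Finset.univ.image (starUser ∘ yIndex y)
  have hK : K ⊆ UstarFin n := Finset.image_subset_iff.2 fun i _ =>
    starUser_mem_UstarFin.2 (yIndex_mem_Icc y i)
  have hcard : (UstarFin n \ K).card = n := by
    rw [Finset.card_sdiff_of_subset hK, card_UstarFin, Finset.card_image_of_injective _
      (starUser_injective.comp (strictMono_yIndex y).injective), Finset.card_univ,
      Fintype.card_fin]
    omega
  obtain ⟨θf, hθf, hext, hfresh⟩ := hwin.exists_isValidPlan (Δ' := UstarFin n \ K)
    (Or.inr ⟨rfl, rfl, Finset.empty_subset _, Finset.sdiff_subset.trans Finset.subset_union_right,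
      by simp [hcard]⟩)
  have hx : xVal θf = xVal θ := funext fun i => by
    obtain ⟨u, hu⟩ := Option.ne_none_iff_exists'.1 ((hθ (.inl i)).2 (by simp [rankPhi]))
    simp [xVal, hu, hext _ _ hu]
  have hy : yVal θf = y := yVal_eq_of_isValidPlan hθf fun i u hu =>
    hfresh _ u (by simpa [rankPhi] using mt (hθ (.inr (.inl i))).1) hu
  exact ⟨zVal θf, hx ▸ hy ▸ phi_of_isValidPlan hθf⟩

end WPhi
theorem WPhi_oneShot_resilient_iff_general
    (n m : ℕ)
    (φ : (Fin n → Bool) → (Fin n → Bool) → (Fin m → Bool) → Prop) :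
    (WPhi n m φ).OneShotResilient n ↔
      ∃ x : Fin n → Bool, ∀ y : Fin n → Bool, ∃ z : Fin m → Bool, φ x y z :=
  ⟨WPhi.exists_of_oneShotResilient, WPhi.oneShotResilient_of_exists⟩

/-- `W_φ` is one-shot resilient for budget `n` if and only
if there exists `x ∈ Bool^n` such that for all `y ∈ Bool^n` there exists
`z ∈ Bool^m` with `φ(x, y, z)`. -/
theorem WPhi_oneShot_resilient_iff
    (n m : ℕ) (hn : 1 ≤ n)
    (φ : (Fin n → Bool) → (Fin n → Bool) → (Fin m → Bool) → Prop) :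
    (WPhi n m φ).OneShotResilient n ↔
      ∃ x : Fin n → Bool, ∀ y : Fin n → Bool, ∃ z : Fin m → Bool, φ x y z :=
  WPhi_oneShot_resilient_iff_general n m φ
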